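/- Let m, n be coprime positive integers with 1 ≤ m/n ≤ 2 and 3 ∤ (m + n), and let Γ = (1/2)·[[m + n, m − 2n], [(m − n)√3, m√3]]ℤ². Then Γ is a sublattice of the hexagonal lattice Λ_h, det(Γ) = n(2m − n)·(√3/2), [Λ_h : Γ] = n(2m − n), and the minimum of Γ equals m² − mn + n². -/
import Mathlib


/-- The set of points of the lattice spanned by the columns of a 2×2 matrix. -/
def latticeOf (A : Matrix (Fin 2) (Fin 2) ℝ) : Set (Fin 2 → ℝ) :=
  {v | ∃ s t : ℤ, v = A.mulVec ![(s : ℝ), (t : ℝ)]}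

/-- Basis matrix of the hexagonal lattice. -/
noncomputable def hexBasis : Matrix (Fin 2) (Fin 2) ℝ :=
  !![1, -(1/2); 0, Real.sqrt 3 / 2]

private lemma key_int (m n s t : ℤ) (hn : 0 < n) (h1 : n ≤ m) (h2 : m ≤ 2 * n)
    (hst : ¬(s = 0 ∧ t = 0)) :
    m ^ 2 - m * n + n ^ 2 ≤ (m ^ 2 - m * n + n ^ 2) * (s + t) ^ 2 - 3 * n ^ 2 * (s * t) := by
  rcases lt_trichotomy (s * t) 0 with h | h | h
  · -- s*t ≤ -1
    have hle : s * t ≤ -1 := by omega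
    nlinarith [sq_nonneg (s + t), mul_nonneg (sub_nonneg.2 h2) (by omega : (0:ℤ) ≤ m + n),
      sq_nonneg (m - n), mul_pos hn hn]
  · -- s*t = 0
    have hq : 0 < m ^ 2 - m * n + n ^ 2 := by nlinarith [mul_nonneg (sub_nonneg.2 h1) (by omega : (0:ℤ) ≤ m), mul_pos hn hn]
    rcases mul_eq_zero.1 h with hs | ht
    · have ht' : t ≠ 0 := by tauto
      have h1' : 1 ≤ t ^ 2 := by nlinarith [sq_abs t, Int.one_le_abs ht']
      subst hs
      nlinarith [mul_le_mul_of_nonneg_left h1' hq.le]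
    · have hs' : s ≠ 0 := by tauto
      have h1' : 1 ≤ s ^ 2 := by nlinarith [sq_abs s, Int.one_le_abs hs']
      subst ht
      nlinarith [mul_le_mul_of_nonneg_left h1' hq.le]
  · -- s*t ≥ 1
    have hge : 1 ≤ s * t := h
    nlinarith [sq_nonneg (s - t), mul_nonneg (sub_nonneg.2 h1) (le_of_lt (lt_of_lt_of_le hn h1)),
      sq_nonneg (m - n), mul_pos hn hn]

theorem stmt_10 (m n : ℤ) (hm : 0 < m) (hn : 0 < n) (hmn : Int.gcd m n = 1)
    (h1 : n ≤ m) (h2 : m ≤ 2 * n) (h3 : ¬ (3 : ℤ) ∣ m + n)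
    (B : Matrix (Fin 2) (Fin 2) ℝ)
    (hB : B = (1/2 : ℝ) • !![((m : ℝ) + n), ((m : ℝ) - 2 * n);
        ((m : ℝ) - n) * Real.sqrt 3, (m : ℝ) * Real.sqrt 3]) :
    latticeOf B ⊆ latticeOf hexBasis ∧
    |B.det| = (n : ℝ) * (2 * m - n) * (Real.sqrt 3 / 2) ∧
    |B.det| / |hexBasis.det| = (n : ℝ) * (2 * m - n) ∧
    IsLeast {x : ℝ | ∃ v ∈ latticeOf B, v ≠ 0 ∧ x = v 0 ^ 2 + v 1 ^ 2}
      ((m : ℝ) ^ 2 - m * n + n ^ 2) := by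
  have hs3 : Real.sqrt 3 ^ 2 = 3 := Real.sq_sqrt (by norm_num)
  have hs3pos : (0:ℝ) < Real.sqrt 3 := Real.sqrt_pos.2 (by norm_num)
  have hv0 : ∀ s t : ℤ, B.mulVec ![(s:ℝ), (t:ℝ)] 0 = (((m:ℝ)+n)*s + ((m:ℝ)-2*n)*t)/2 := by
    intro s t; subst hB
    simp [Matrix.mulVec, dotProduct, Fin.sum_univ_two]; ring
  have hv1 : ∀ s t : ℤ, B.mulVec ![(s:ℝ), (t:ℝ)] 1 = (((m:ℝ)-n)*s + (m:ℝ)*t)*Real.sqrt 3/2 := by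
    intro s t; subst hB
    simp [Matrix.mulVec, dotProduct, Fin.sum_univ_two]; ring
  have hnorm : ∀ s t : ℤ, (B.mulVec ![(s:ℝ), (t:ℝ)]) 0 ^ 2 + (B.mulVec ![(s:ℝ), (t:ℝ)]) 1 ^ 2
      = (((m:ℝ)^2 - m*n + n^2)*((s:ℝ)+t)^2 - 3*n^2*((s:ℝ)*t)) := by
    intro s t
    rw [hv0, hv1]
    linear_combination (((((m:ℝ)-n)*s + (m:ℝ)*t)^2)/4) * hs3
  have hdetB : B.det = (n : ℝ) * (2 * m - n) * (Real.sqrt 3 / 2) := by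
    subst hB
    rw [Matrix.det_fin_two]
    simp [Matrix.smul_apply]
    ring
  have hdetpos : (0:ℝ) < (n : ℝ) * (2 * m - n) * (Real.sqrt 3 / 2) := by
    have : (0:ℝ) < (n:ℝ) := by exact_mod_cast hn
    have h2mn : (0:ℝ) < 2 * (m:ℝ) - n := by
      have : (n:ℝ) ≤ (m:ℝ) := by exact_mod_cast h1
      linarith
    positivity
  have hdethex : hexBasis.det = Real.sqrt 3 / 2 := by
    rw [hexBasis, Matrix.det_fin_two]
    norm_num
  refine ⟨?_, ?_, ?_, ?_, ?_⟩
  · -- sublattice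
    rintro v ⟨s, t, hv⟩
    refine ⟨s * m + t * (m - n), s * (m - n) + t * m, ?_⟩
    rw [hv]; subst hB
    funext i
    fin_cases i <;>
    · simp [hexBasis, Matrix.mulVec, dotProduct, Fin.sum_univ_two]
      push_cast
      ring
  · rw [hdetB]; exact abs_of_pos hdetpos
  · rw [hdetB, hdethex, abs_of_pos hdetpos, abs_of_pos (by positivity : (0:ℝ) < Real.sqrt 3 / 2)]
    field_simp
  · -- membership
    refine ⟨B.mulVec ![(1:ℝ), (0:ℝ)], ⟨1, 0, by norm_num⟩, ?_, ?_⟩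
    · intro h
      have e := hv0 1 0
      push_cast at e
      have h0 := congrFun h 0
      rw [e] at h0
      have hm' : (0:ℝ) < m := by exact_mod_cast hm
      have hn' : (0:ℝ) < n := by exact_mod_cast hn
      simp [Pi.zero_apply] at h0
      linarith
    · have e := hnorm 1 0
      push_cast at e
      rw [e]; ring
  · -- lower bound
    rintro x ⟨v, ⟨s, t, hv⟩, hvne, hx⟩
    have hst : ¬(s = 0 ∧ t = 0) := by
      rintro ⟨rfl, rfl⟩
      apply hvne
      rw [hv]
      have e0 := hv0 0 0
      have e1 := hv1 0 0
      push_cast at e0 e1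
      funext i
      fin_cases i <;> simp [e0, e1]
    have hZ := key_int m n s t hn h1 h2 hst
    have hZ' : ((m:ℝ)^2 - m*n + n^2) ≤ ((m:ℝ)^2 - m*n + n^2)*((s:ℝ)+t)^2 - 3*n^2*((s:ℝ)*t) := by
      exact_mod_cast hZ
    rw [hx, hv, hnorm s t]
    exact hZ'
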